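/- The Λ-translates of 𝔓 tessellate H₀: the union ⋃_{μ∈Λ}(𝔓 + μ) equals H₀, and for distinct μ, μ′ ∈ Λ the interiors of 𝔓 + μ and 𝔓 + μ′ relative to H₀ are disjoint. Moreover the tessellation is preserved by the affine Weyl group Λ ⋊ Σ_{n+1}: for every σ ∈ Σ_{n+1} and μ, ν ∈ Λ, one has σ(𝔓 + μ) + ν = 𝔓 + (σ(μ) + ν), again a tile. -/

import Mathlib

open Finset Pointwise

noncomputable section

/-- The ambient Euclidean space `ℝ^{n+1}`. -/
abbrev Amb (n : ℕ) := EuclideanSpace ℝ (Fin (n + 1))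

/-- The hyperplane `H₀ = {x ∈ ℝ^{n+1} : x_1 + ⋯ + x_{n+1} = 0}`. -/
def H0 (n : ℕ) : Submodule ℝ (Amb n) where
  carrier := {x | ∑ i, x i = 0}
  add_mem' := by
    intro a b ha hb
    simp only [Set.mem_setOf_eq, PiLp.add_apply] at *
    simp [Finset.sum_add_distrib, ha, hb]
  zero_mem' := by
    simp only [Set.mem_setOf_eq, PiLp.zero_apply]
    simp
  smul_mem' := by
    intro c a ha
    simp only [Set.mem_setOf_eq, PiLp.smul_apply, smul_eq_mul] at *
    rw [← Finset.mul_sum, ha, mul_zero]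

/-- `λ_i = e_i − 𝟙/(n+1) ∈ H₀`. -/
def lamb (n : ℕ) (i : Fin (n + 1)) : H0 n :=
  ⟨(WithLp.toLp 2 (fun j => (if j = i then (1 : ℝ) else 0) - 1 / (n + 1) : Fin (n + 1) → ℝ) : Amb n), by
    have h1 : (n : ℝ) + 1 ≠ 0 := by positivity
    show ∑ j, ((if j = i then (1 : ℝ) else 0) - 1 / (n + 1)) = 0
    rw [Finset.sum_sub_distrib]
    simp only [Finset.sum_ite_eq', Finset.mem_univ, if_true, Finset.sum_const,
      Finset.card_univ, Fintype.card_fin, nsmul_eq_mul]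
    push_cast
    field_simp
    norm_num⟩

/-- The lattice `Λ ⊂ H₀` generated by `λ_1, …, λ_{n+1}`. -/
def latL (n : ℕ) : AddSubgroup (H0 n) := AddSubgroup.closure (Set.range (lamb n))

/-- The coordinate permutation action of `Σ_{n+1}` on `H₀`. -/
def permAct (n : ℕ) (σ : Equiv.Perm (Fin (n + 1))) (x : H0 n) : H0 n :=
  ⟨(WithLp.toLp 2 (fun i => (x : Amb n) (σ⁻¹ i) : Fin (n + 1) → ℝ) : Amb n), by
    show ∑ i, (x : Amb n) (σ⁻¹ i) = 0
    rw [Equiv.sum_comp σ⁻¹ (fun i => (x : Amb n) i)]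
    exact x.2⟩

/-- The center point `c ∈ H₀` with `c_a = (2a − n − 2)/(2(n+1))`, `a = 1, …, n+1`. -/
def ctr (n : ℕ) : H0 n :=
  ⟨(WithLp.toLp 2 (fun i => (2 * (i : ℕ) - n) / (2 * (n + 1)) : Fin (n + 1) → ℝ) : Amb n), by
    show ∑ i : Fin (n + 1), ((2 * (i : ℕ) - (n : ℝ)) / (2 * (n + 1))) = 0
    rw [← Finset.sum_div]
    have h1 : ∑ i : Fin (n + 1), ((i : ℕ) : ℝ) = n * (n + 1) / 2 := by
      rw [Fin.sum_univ_eq_sum_range (fun i => (i : ℝ)) (n + 1)]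
      have h2 := Finset.sum_range_id_mul_two (n + 1)
      have h3 : ((∑ i ∈ Finset.range (n + 1), i : ℕ) : ℝ) * 2 = (n + 1) * n := by
        exact_mod_cast congrArg (fun m : ℕ => (m : ℝ)) h2
      push_cast at h3 ⊢
      linarith
    have h : ∑ i : Fin (n + 1), (2 * ((i : ℕ) : ℝ) - (n : ℝ)) = 0 := by
      rw [Finset.sum_sub_distrib, ← Finset.mul_sum, h1]
      simp [Finset.card_univ]
      ring
    rw [h, zero_div]⟩

/-- The centered `n`-permutohedron `𝔓 = conv {σ·c : σ ∈ Σ_{n+1}} ⊂ H₀`. -/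
def Perm (n : ℕ) : Set (H0 n) :=
  convexHull ℝ {x | ∃ σ : Equiv.Perm (Fin (n + 1)), x = permAct n σ (ctr n)}

/-- The tile `𝔓 + μ` of the permutohedral tiling. -/
def tile (n : ℕ) (μ : H0 n) : Set (H0 n) := (fun x => μ + x) '' Perm n

/-- `F` is a face of `Q`: the set of points of `Q` where some linear functional `ℓ`
attains its maximum over `Q`. -/
def IsFace {E : Type*} [AddCommGroup E] [Module ℝ E] (Q F : Set E) : Prop :=
  ∃ ℓ : E →ₗ[ℝ] ℝ, F = {x ∈ Q | ∀ y ∈ Q, ℓ y ≤ ℓ x}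

/-- The dimension of a face: the dimension of its affine span. -/
def faceDim {E : Type*} [AddCommGroup E] [Module ℝ E] (F : Set E) : ℕ :=
  Module.finrank ℝ (affineSpan ℝ F).direction

/-- A vertex of `Q` is a point lying in a 0-dimensional face of `Q`. -/
def IsVertex {E : Type*} [AddCommGroup E] [Module ℝ E] (Q : Set E) (x : E) : Prop :=
  ∃ F : Set E, IsFace Q F ∧ faceDim F = 0 ∧ x ∈ F
section Aux
variable {n : ℕ}

lemma H0_sum (x : H0 n) : ∑ i, (x : Amb n) i = 0 := x.2

lemma lamb_coe (i j : Fin (n+1)) : (lamb n i : Amb n) j = (if j = i then 1 else 0) - 1/(n+1) := rfl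

lemma ctr_coe (i : Fin (n+1)) : (ctr n : Amb n) i = (2*(i:ℕ) - (n:ℝ))/(2*((n:ℝ)+1)) := rfl

lemma permAct_coe (σ : Equiv.Perm (Fin (n+1))) (x : H0 n) (i : Fin (n+1)) :
    (permAct n σ x : Amb n) i = (x : Amb n) (σ⁻¹ i) := rfl

/-- upper bound function for subset sums -/
def Fb (n k : ℕ) : ℝ := k * (((n:ℝ)+1)-k) / (2*((n:ℝ)+1))

/-- lower bound function -/
def Gb (n k : ℕ) : ℝ := ((k:ℝ)^2 - ((n:ℝ)+1)*k) / (2*((n:ℝ)+1))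

/-- The H-description polytope. -/
def PH (n : ℕ) : Set (H0 n) :=
  {x | ∀ S : Finset (Fin (n+1)), ∑ i ∈ S, (x : Amb n) i ≤ Fb n S.card}

end Aux
section Aux2
variable {n : ℕ}

lemma permAct_mul (σ τ : Equiv.Perm (Fin (n+1))) (x : H0 n) :
    permAct n σ (permAct n τ x) = permAct n (σ * τ) x := by
  apply Subtype.ext; apply PiLp.ext; intro i
  show (x : Amb n) (τ⁻¹ (σ⁻¹ i)) = (x : Amb n) ((σ * τ)⁻¹ i)
  rw [mul_inv_rev, Equiv.Perm.mul_apply]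

lemma permAct_one (x : H0 n) : permAct n 1 x = x := by
  apply Subtype.ext; apply PiLp.ext; intro i; rfl

lemma permAct_add (σ : Equiv.Perm (Fin (n+1))) (x y : H0 n) :
    permAct n σ (x + y) = permAct n σ x + permAct n σ y := by
  apply Subtype.ext; apply PiLp.ext; intro i
  show ((x + y) : Amb n) (σ⁻¹ i) = ((permAct n σ x : Amb n) + (permAct n σ y : Amb n)) i
  simp only [Submodule.coe_add, PiLp.add_apply]
  rfl

lemma permAct_smul (σ : Equiv.Perm (Fin (n+1))) (c : ℝ) (x : H0 n) :
    permAct n σ (c • x) = c • permAct n σ x := by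
  apply Subtype.ext; apply PiLp.ext; intro i
  show ((c • x : H0 n) : Amb n) (σ⁻¹ i) = (c • (permAct n σ x : Amb n)) i
  simp only [Submodule.coe_smul, PiLp.smul_apply]
  rfl

/-- helper: strict mono into ℕ grows at least like identity -/
lemma strictMono_fin_le {k : ℕ} {f : Fin k → ℕ} (hf : StrictMono f) :
    ∀ j : Fin k, (j : ℕ) ≤ f j := by
  have key : ∀ v, ∀ j : Fin k, (j : ℕ) = v → v ≤ f j := by
    intro v
    induction v with
    | zero => intro j _; exact Nat.zero_le _
    | succ v ih =>
      intro j hj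
      have hv : v < k := by omega
      have h1 : (⟨v, hv⟩ : Fin k) < j := by simp [Fin.lt_def, hj]
      have h2 := hf h1
      have h3 := ih ⟨v, hv⟩ rfl
      omega
  exact fun j => key (j : ℕ) j rfl

lemma sum_range_le_sum_distinct {m : ℕ} (T : Finset (Fin m)) :
    ∑ j ∈ Finset.range T.card, j ≤ ∑ a ∈ T, (a : ℕ) := by
  classical
  set k := T.card with hk
  let e := T.orderIsoOfFin hk.symm
  have hmono : StrictMono (fun j : Fin k => ((e j : Fin m) : ℕ)) := by
    intro a b hab
    exact (Fin.lt_def.mp (e.strictMono hab))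
  have hsum : ∑ a ∈ T, (a : ℕ) = ∑ j : Fin k, ((e j : Fin m) : ℕ) := by
    rw [← Finset.sum_attach T (fun a => (a : ℕ))]
    exact (Equiv.sum_comp (e.toEquiv) (fun a => ((a : Fin m) : ℕ))).symm
  rw [hsum, ← Fin.sum_univ_eq_sum_range (fun j => j) k]
  exact Finset.sum_le_sum (fun j _ => strictMono_fin_le hmono j)

/-- sum of distinct values bounded above -/
lemma sum_distinct_le {m : ℕ} (T : Finset (Fin (m+1))) :
    2 * (∑ a ∈ T, (a : ℕ)) + T.card * T.card ≤ 2 * T.card * m + T.card := by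
  classical
  set k := T.card with hk
  set A := ∑ a ∈ T, (a : ℕ) with hA
  have hrev : (T.image Fin.rev).card = k := by
    rw [Finset.card_image_of_injective _ Fin.rev_injective]
  have h1 : ∑ j ∈ Finset.range k, j ≤ ∑ a ∈ T.image Fin.rev, (a : ℕ) := by
    have := sum_range_le_sum_distinct (T.image Fin.rev)
    rwa [hrev] at this
  have h2 : ∑ a ∈ T.image Fin.rev, (a : ℕ) = ∑ a ∈ T, (m - (a : ℕ)) := by
    rw [Finset.sum_image (fun a _ b _ h => Fin.rev_injective h)]
    apply Finset.sum_congr rfl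
    intro a _
    show ((Fin.rev a : Fin (m+1)) : ℕ) = m - (a : ℕ)
    rw [Fin.val_rev]
    omega
  have h3 : (∑ a ∈ T, (m - (a : ℕ))) + A = k * m := by
    rw [hA, ← Finset.sum_add_distrib]
    have : ∀ a ∈ T, m - (a : ℕ) + (a : ℕ) = m := by
      intro a _; have := a.2; omega
    rw [Finset.sum_congr rfl this, Finset.sum_const, smul_eq_mul]
  have h4 : (∑ j ∈ Finset.range k, j) * 2 = k * (k - 1) := Finset.sum_range_id_mul_two k
  have h5 : k * (k - 1) + k = k * k := by
    cases k with
    | zero => rfl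
    | succ j => simp [Nat.succ_sub_one]; ring
  -- combine
  set B := ∑ a ∈ T, (m - (a : ℕ)) with hB
  set r := ∑ j ∈ Finset.range k, j with hr
  have : k*k ≤ 2 * B + k := by omega
  nlinarith [h3, this]

end Aux2
section Aux3
variable {n : ℕ}

lemma two_n1_pos : (0:ℝ) < 2*((n:ℝ)+1) := by positivity

/-- subset sums at a vertex -/
lemma vertex_subset_sum (σ : Equiv.Perm (Fin (n+1))) (S : Finset (Fin (n+1))) :
    ∑ i ∈ S, (permAct n σ (ctr n) : Amb n) i ≤ Fb n S.card := by
  classical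
  have hinj : Function.Injective (σ⁻¹ : Equiv.Perm (Fin (n+1))) := (σ⁻¹).injective
  have h1 : ∑ i ∈ S, (permAct n σ (ctr n) : Amb n) i
      = ∑ a ∈ S.image (σ⁻¹ : Equiv.Perm (Fin (n+1))), (2*(a:ℕ) - (n:ℝ))/(2*((n:ℝ)+1)) := by
    rw [Finset.sum_image (fun a _ b _ h => hinj h)]
    apply Finset.sum_congr rfl
    intro i _
    rw [permAct_coe, ctr_coe]
  set T := S.image (σ⁻¹ : Equiv.Perm (Fin (n+1))) with hT
  have hcard : T.card = S.card := Finset.card_image_of_injective _ hinj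
  set k := S.card with hk
  have hnat := sum_distinct_le T
  rw [hcard] at hnat
  have hreal : ∑ a ∈ T, (2*(a:ℕ) - (n:ℝ)) ≤ (k:ℝ)*(((n:ℝ)+1)-k) := by
    have hsplit : ∑ a ∈ T, (2*(a:ℕ) - (n:ℝ)) = 2*(∑ a ∈ T, ((a:ℕ):ℝ)) - k*(n:ℝ) := by
      rw [Finset.sum_sub_distrib, Finset.sum_const, ← Finset.mul_sum, nsmul_eq_mul, hcard]
    rw [hsplit]
    have hc : ((∑ a ∈ T, (a:ℕ) : ℕ) : ℝ) = ∑ a ∈ T, ((a:ℕ):ℝ) := by push_cast; rfl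
    have : (2*(∑ a ∈ T, (a:ℕ)) + k*k : ℝ) ≤ 2*k*n + k := by exact_mod_cast hnat
    rw [hc] at this
    ring_nf
    ring_nf at this
    linarith
  rw [h1, Fb, ← Finset.sum_div]
  exact div_le_div_of_nonneg_right hreal two_n1_pos.le

end Aux3
section Aux4
variable {n : ℕ}

lemma coord_combo (a b : ℝ) (x y : H0 n) (i : Fin (n+1)) :
    ((a • x + b • y : H0 n) : Amb n) i = a * (x : Amb n) i + b * (y : Amb n) i := by
  simp only [Submodule.coe_add, Submodule.coe_smul, PiLp.add_apply, PiLp.smul_apply,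
    smul_eq_mul]

lemma convex_PH : Convex ℝ (PH n) := by
  intro x hx y hy a b ha hb hab
  intro S
  have h1 := hx S
  have h2 := hy S
  have h3 : ∑ i ∈ S, ((a • x + b • y : H0 n) : Amb n) i
      = a * (∑ i ∈ S, (x : Amb n) i) + b * (∑ i ∈ S, (y : Amb n) i) := by
    rw [Finset.mul_sum, Finset.mul_sum, ← Finset.sum_add_distrib]
    exact Finset.sum_congr rfl fun i _ => coord_combo a b x y i
  rw [h3]
  have e : a * Fb n S.card + b * Fb n S.card = Fb n S.card := by
    rw [← add_mul, hab, one_mul]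
  have e1 := mul_le_mul_of_nonneg_left h1 ha
  have e2 := mul_le_mul_of_nonneg_left h2 hb
  linarith

lemma continuous_coord_sum (S : Finset (Fin (n+1))) :
    Continuous fun x : H0 n => ∑ i ∈ S, (x : Amb n) i := by
  refine continuous_finset_sum _ fun i _ => ?_
  exact (continuous_apply i).comp ((PiLp.continuous_ofLp ..).comp continuous_subtype_val)

lemma closed_PH : IsClosed (PH n) := by
  have h : PH n = ⋂ S : Finset (Fin (n+1)),
      {x : H0 n | ∑ i ∈ S, (x : Amb n) i ≤ Fb n S.card} := by
    ext x; simp [PH, Set.mem_iInter]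
  rw [h]
  exact isClosed_iInter fun S => isClosed_le (continuous_coord_sum S) continuous_const

lemma Fb_le_one (k : ℕ) : Fb n k ≤ (n:ℝ)+1 := by
  rw [Fb, div_le_iff₀ two_n1_pos]
  nlinarith [sq_nonneg ((k:ℝ) - ((n:ℝ)+1)), Nat.cast_nonneg (α := ℝ) k, sq_nonneg ((k:ℝ)+1)]

lemma coord_abs_le (x : H0 n) (hx : x ∈ PH n) (i : Fin (n+1)) :
    |(x : Amb n) i| ≤ (n:ℝ)+1 := by
  have hup : (x : Amb n) i ≤ (n:ℝ)+1 := by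
    have h := hx {i}
    simpa using h.trans (Fb_le_one 1)
  have hlo : -((n:ℝ)+1) ≤ (x : Amb n) i := by
    have h := hx (Finset.univ.erase i)
    have hsum : ∑ j ∈ Finset.univ.erase i, (x : Amb n) j = - (x : Amb n) i := by
      have := Finset.sum_erase_add Finset.univ (fun j => (x : Amb n) j) (Finset.mem_univ i)
      have h0 := H0_sum x
      linarith
    rw [hsum] at h
    have := h.trans (Fb_le_one _)
    linarith
  exact abs_le.mpr ⟨hlo, hup⟩

lemma norm_le_of_PH (x : H0 n) (hx : x ∈ PH n) : ‖x‖ ≤ ((n:ℝ)+1)*((n:ℝ)+1) := by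
  have h1 : ‖x‖ = ‖(x : Amb n)‖ := rfl
  rw [h1, EuclideanSpace.norm_eq]
  have h2 : ∑ i, ‖(x : Amb n) i‖^2 ≤ ∑ _i : Fin (n+1), ((n:ℝ)+1)^2 := by
    refine Finset.sum_le_sum fun i _ => ?_
    have := coord_abs_le x hx i
    have h3 : ‖(x : Amb n) i‖ ≤ (n:ℝ)+1 := by rwa [Real.norm_eq_abs]
    nlinarith [norm_nonneg ((x : Amb n) i)]
  have h4 : Real.sqrt (∑ i, ‖(x : Amb n) i‖^2) ≤ Real.sqrt (((n:ℝ)+1)*((n:ℝ)+1)^2) := by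
    apply Real.sqrt_le_sqrt
    simpa using h2
  refine h4.trans ?_
  have h5 : ((n:ℝ)+1)*((n:ℝ)+1)^2 ≤ (((n:ℝ)+1)*((n:ℝ)+1))^2 := by
    nlinarith [Nat.cast_nonneg (α := ℝ) n]
  calc Real.sqrt (((n:ℝ)+1)*((n:ℝ)+1)^2) ≤ Real.sqrt ((((n:ℝ)+1)*((n:ℝ)+1))^2) :=
        Real.sqrt_le_sqrt h5
    _ = ((n:ℝ)+1)*((n:ℝ)+1) := Real.sqrt_sq (by positivity)

lemma compact_PH : IsCompact (PH n) := by
  have hb : Bornology.IsBounded (PH n) := by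
    rw [Metric.isBounded_iff_subset_closedBall 0]
    exact ⟨((n:ℝ)+1)*((n:ℝ)+1), fun x hx => by
      simp only [Metric.mem_closedBall, dist_zero_right]
      exact norm_le_of_PH x hx⟩
  exact Metric.isCompact_of_isClosed_isBounded closed_PH hb

lemma Perm_subset_PH : Perm n ⊆ PH n := by
  apply convexHull_min _ convex_PH
  rintro v ⟨σ, rfl⟩
  intro S
  exact vertex_subset_sum σ S

end Aux4
section Aux5
variable {n : ℕ}

lemma Gb_neg_Fb (k : ℕ) : Gb n k = -Fb n k := by
  rw [Gb, Fb]; ring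

lemma Fb_compl {k : ℕ} (hk : k ≤ n+1) : Fb n (n+1-k) = Fb n k := by
  rw [Fb, Fb, Nat.cast_sub hk]
  push_cast
  ring

/-- prefix finset -/
def PreF (n : ℕ) (k : ℕ) (hk : k ≤ n+1) : Finset (Fin (n+1)) :=
  Finset.univ.map (Fin.castLEEmb hk)

lemma PreF_card {k : ℕ} (hk : k ≤ n+1) : (PreF n k hk).card = k := by
  rw [PreF, Finset.card_map, Finset.card_univ, Fintype.card_fin]

/-- prefix sums -/
def Bk (y : Fin (n+1) → ℝ) (k : ℕ) (hk : k ≤ n+1) : ℝ :=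
  ∑ j : Fin k, y (Fin.castLE hk j)

lemma PreF_sum (y : Fin (n+1) → ℝ) {k : ℕ} (hk : k ≤ n+1) :
    ∑ a ∈ PreF n k hk, y a = Bk y k hk := by
  rw [PreF, Finset.sum_map, Bk]
  rfl

lemma Bk_zero (y : Fin (n+1) → ℝ) (h0 : (0:ℕ) ≤ n+1) : Bk y 0 h0 = 0 := by
  simp [Bk]

lemma Bk_succ (y : Fin (n+1) → ℝ) {k : ℕ} (hk : k+1 ≤ n+1) :
    Bk y (k+1) hk = Bk y k (Nat.le_of_succ_le hk) + y ⟨k, hk⟩ := by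
  rw [Bk, Fin.sum_univ_castSucc]
  congr 1

lemma Bk_total (y : Fin (n+1) → ℝ) : Bk y (n+1) le_rfl = ∑ i, y i := by
  rw [Bk]
  apply Finset.sum_congr rfl
  intro j _
  congr 1

section Enum
variable (T : Finset (Fin (n+1)))

/-- increasing enumeration of a finset -/
def enum (j : Fin T.card) : Fin (n+1) := (T.orderIsoOfFin rfl j : Fin (n+1))

lemma enum_mem (j : Fin T.card) : enum T j ∈ T := (T.orderIsoOfFin rfl j).2

lemma enum_sum (y : Fin (n+1) → ℝ) : ∑ a ∈ T, y a = ∑ j : Fin T.card, y (enum T j) := by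
  classical
  rw [← Finset.sum_attach T (fun a => y a)]
  exact (Equiv.sum_comp (T.orderIsoOfFin rfl).toEquiv (fun a => y (a : Fin (n+1)))).symm

lemma enum_ge (j : Fin T.card) : (j : ℕ) ≤ (enum T j : ℕ) := by
  have hmono : StrictMono (fun j : Fin T.card => ((enum T j) : ℕ)) := by
    intro a b hab
    exact Fin.lt_def.mp ((T.orderIsoOfFin rfl).strictMono hab)
  exact strictMono_fin_le hmono j

lemma enum_strictMono : StrictMono (enum T) := by
  intro a b hab
  exact (T.orderIsoOfFin rfl).strictMono hab

lemma card_le_n1 : T.card ≤ n+1 := by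
  have := Finset.card_le_univ T
  simpa using this

lemma enum_termwise {y : Fin (n+1) → ℝ} (hmono : Monotone y) (j : Fin T.card) :
    y (Fin.castLE (card_le_n1 T) j) ≤ y (enum T j) := by
  apply hmono
  rw [Fin.le_def]
  exact enum_ge T j

lemma Bk_le_sum {y : Fin (n+1) → ℝ} (hmono : Monotone y) :
    Bk y T.card (card_le_n1 T) ≤ ∑ a ∈ T, y a := by
  rw [enum_sum T y, Bk]
  exact Finset.sum_le_sum fun j _ => enum_termwise T hmono j

lemma tight_eq {y : Fin (n+1) → ℝ} (hmono : Monotone y)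
    (heq : ∑ a ∈ T, y a = Bk y T.card (card_le_n1 T)) :
    ∀ j : Fin T.card, y (enum T j) = y (Fin.castLE (card_le_n1 T) j) := by
  have h1 : ∑ j : Fin T.card, y (Fin.castLE (card_le_n1 T) j)
      = ∑ j : Fin T.card, y (enum T j) := by
    rw [← enum_sum T y, heq, Bk]
  have := (Finset.sum_eq_sum_iff_of_le
    (fun j (_ : j ∈ Finset.univ) => enum_termwise T hmono j)).mp h1
  exact fun j => (this j (Finset.mem_univ j)).symm

end Enum
end Aux5
section Aux6
variable {n : ℕ}

/-- proof-free prefix sums -/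
def Bk2 (y : Fin (n+1) → ℝ) (k : ℕ) : ℝ :=
  ∑ i ∈ Finset.univ.filter (fun i : Fin (n+1) => (i:ℕ) < k), y i

lemma Bk2_eq (y : Fin (n+1) → ℝ) {k : ℕ} (hk : k ≤ n+1) : Bk2 y k = Bk y k hk := by
  rw [Bk2, ← PreF_sum y hk]
  congr 1
  ext i
  simp only [Finset.mem_filter, Finset.mem_univ, true_and, PreF, Finset.mem_map]
  constructor
  · intro hik
    refine ⟨⟨(i:ℕ), hik⟩, ?_⟩
    rfl
  · rintro ⟨j, rfl⟩
    exact j.2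

lemma Gb_zero : Gb n 0 = 0 := by rw [Gb]; norm_num

lemma Gb_total : Gb n (n+1) = 0 := by
  rw [Gb]
  have h : (((n:ℕ)+1:ℕ):ℝ)^2 - ((n:ℝ)+1)*(((n:ℕ)+1:ℕ):ℝ) = 0 := by push_cast; ring
  rw [h, zero_div]

section WithHyp
variable {y : Fin (n+1) → ℝ}

lemma lb_subset (hsum : ∑ i, y i = 0)
    (hub : ∀ S : Finset (Fin (n+1)), ∑ i ∈ S, y i ≤ Fb n S.card)
    (S : Finset (Fin (n+1))) : Gb n S.card ≤ ∑ i ∈ S, y i := by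
  classical
  have h1 := hub Sᶜ
  have h2 : ∑ i ∈ Sᶜ, y i + ∑ i ∈ S, y i = 0 := by
    rw [Finset.sum_compl_add_sum]
    exact hsum
  have hcard : Sᶜ.card = n+1 - S.card := by
    rw [Finset.card_compl]
    simp
  rw [hcard, Fb_compl (card_le_n1 S)] at h1
  rw [Gb_neg_Fb]
  linarith

lemma lb_prefix (hsum : ∑ i, y i = 0)
    (hub : ∀ S : Finset (Fin (n+1)), ∑ i ∈ S, y i ≤ Fb n S.card)
    {k : ℕ} (hk : k ≤ n+1) : Gb n k ≤ Bk2 y k := by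
  have h := lb_subset hsum hub (PreF n k hk)
  rw [PreF_sum y hk, PreF_card hk] at h
  rw [Bk2_eq y hk]
  exact h

lemma Gb_secondDiff (l : ℕ) :
    Gb n (l+2) - Gb n (l+1) = Gb n (l+1) - Gb n l + 1/((n:ℝ)+1) := by
  rw [Gb, Gb, Gb]
  have hpos : ((n:ℝ)+1) ≠ 0 := by positivity
  push_cast
  field_simp
  ring

lemma ascent (hsum : ∑ i, y i = 0)
    (hub : ∀ S : Finset (Fin (n+1)), ∑ i ∈ S, y i ≤ Fb n S.card)
    {l : ℕ} (hl : l + 1 ≤ n) (ht : Bk2 y (l+1) = Gb n (l+1)) :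
    y ⟨l, by omega⟩ < y ⟨l+1, by omega⟩ := by
  have e1 : Bk2 y (l+1) = Bk2 y l + y ⟨l, by omega⟩ := by
    rw [Bk2_eq y (show l+1 ≤ n+1 by omega), Bk2_eq y (show l ≤ n+1 by omega)]
    exact Bk_succ y _
  have e2 : Bk2 y (l+2) = Bk2 y (l+1) + y ⟨l+1, by omega⟩ := by
    rw [Bk2_eq y (show l+2 ≤ n+1 by omega), Bk2_eq y (show l+1 ≤ n+1 by omega)]
    exact Bk_succ y _
  have b1 : Gb n l ≤ Bk2 y l := lb_prefix hsum hub (by omega)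
  have b2 : Gb n (l+2) ≤ Bk2 y (l+2) := lb_prefix hsum hub (by omega)
  have hd := Gb_secondDiff (n := n) l
  have hpos : (0:ℝ) < 1/((n:ℝ)+1) := by positivity
  linarith

end WithHyp
end Aux6
section Key
variable {n : ℕ} {y : Fin (n+1) → ℝ}

lemma Bk2_zero (y : Fin (n+1) → ℝ) : Bk2 y 0 = 0 := by
  rw [Bk2_eq y (Nat.zero_le _), Bk_zero]

lemma Bk2_total (y : Fin (n+1) → ℝ) : Bk2 y (n+1) = ∑ i, y i := by
  rw [Bk2_eq y le_rfl, Bk_total]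

set_option maxHeartbeats 2000000 in
lemma key_claim (hmono : Monotone y) (hsum : ∑ i, y i = 0)
    (hub : ∀ S : Finset (Fin (n+1)), ∑ i ∈ S, y i ≤ Fb n S.card)
    (hne : ∃ m, 1 ≤ m ∧ m ≤ n ∧ Bk2 y m ≠ Gb n m) :
    ∃ p q : Fin (n+1), p ≠ q ∧
      ∀ S : Finset (Fin (n+1)), ∑ i ∈ S, y i = Fb n S.card → (p ∈ S ↔ q ∈ S) := by
  classical
  set Aset := (Finset.range (n+1)).filter (fun m => 1 ≤ m ∧ Bk2 y m ≠ Gb n m) with hAset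
  have hAne : Aset.Nonempty := by
    obtain ⟨m, h1, h2, h3⟩ := hne
    exact ⟨m, Finset.mem_filter.mpr ⟨Finset.mem_range.mpr (by omega), h1, h3⟩⟩
  set ks := Aset.min' hAne with hks
  have hkA : ks ∈ Aset := Aset.min'_mem hAne
  have k12 : 1 ≤ ks ∧ ks ≤ n := by
    have := Finset.mem_filter.mp hkA
    have h2 := Finset.mem_range.mp this.1
    exact ⟨this.2.1, by omega⟩
  obtain ⟨k1, k2⟩ := k12
  have k3 : Bk2 y ks ≠ Gb n ks := (Finset.mem_filter.mp hkA).2.2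
  have kmin : ∀ m, 1 ≤ m → m < ks → Bk2 y m = Gb n m := by
    intro m h1 h2
    by_contra h3
    have hmem : m ∈ Aset := Finset.mem_filter.mpr ⟨Finset.mem_range.mpr (by omega), h1, h3⟩
    have := Aset.min'_le m hmem
    omega
  set Bset := (Finset.range (n+2)).filter (fun m => ks < m ∧ Bk2 y m = Gb n m) with hBset
  have hBne : Bset.Nonempty := by
    refine ⟨n+1, Finset.mem_filter.mpr ⟨Finset.mem_range.mpr (by omega), by omega, ?_⟩⟩
    rw [Bk2_total y, hsum, Gb_total]
  set mp := Bset.min' hBne with hmp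
  have hmpA : mp ∈ Bset := Bset.min'_mem hBne
  have mp1 : ks < mp := (Finset.mem_filter.mp hmpA).2.1
  have mp2 : mp ≤ n+1 := by
    have := Finset.mem_range.mp (Finset.mem_filter.mp hmpA).1
    omega
  have mp3 : Bk2 y mp = Gb n mp := (Finset.mem_filter.mp hmpA).2.2
  have mpmin : ∀ m, ks ≤ m → m < mp → Bk2 y m ≠ Gb n m := by
    intro m hm1 hm2 hm3
    rcases eq_or_lt_of_le hm1 with rfl | hlt
    · exact k3 hm3
    · have hmem : m ∈ Bset := Finset.mem_filter.mpr ⟨Finset.mem_range.mpr (by omega), hlt, hm3⟩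
      have := Bset.min'_le m hmem
      omega
  have km1 : Bk2 y (ks-1) = Gb n (ks-1) := by
    rcases Nat.eq_or_lt_of_le k1 with h | h
    · rw [← h]
      simp only [Nat.sub_self]
      rw [Bk2_zero y, Gb_zero]
    · exact kmin (ks-1) (by omega) (by omega)
  refine ⟨⟨ks-1, by omega⟩, ⟨ks, by omega⟩, ?_, ?_⟩
  · intro h
    have := congrArg Fin.val h
    simp at this
    omega
  intro S hS
  set T := Sᶜ with hT
  have hTcard : T.card = n+1 - S.card := by
    rw [hT, Finset.card_compl]
    simp
  have hTsum : ∑ i ∈ T, y i = Gb n T.card := by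
    have h2 : ∑ i ∈ T, y i + ∑ i ∈ S, y i = 0 := by
      rw [hT, Finset.sum_compl_add_sum]
      exact hsum
    rw [hTcard, Gb_neg_Fb, Fb_compl (card_le_n1 S)]
    linarith
  suffices hiff : ((⟨ks-1, by omega⟩ : Fin (n+1)) ∈ T ↔ (⟨ks, by omega⟩ : Fin (n+1)) ∈ T) by
    rw [hT] at hiff
    simp only [Finset.mem_compl] at hiff
    tauto
  -- main claim
  have hmle : T.card ≤ n+1 := card_le_n1 T
  have hlow : Gb n T.card ≤ Bk2 y T.card := lb_prefix hsum hub hmle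
  have hup2 : Bk2 y T.card ≤ ∑ i ∈ T, y i := by
    rw [Bk2_eq y hmle]
    exact Bk_le_sum T hmono
  have htight : Bk2 y T.card = Gb n T.card := le_antisymm (by linarith) hlow
  have hpw : ∀ j : Fin T.card, y (enum T j) = y (Fin.castLE (card_le_n1 T) j) := by
    apply tight_eq T hmono
    rw [hTsum, ← Bk2_eq y (card_le_n1 T)]
    exact htight.symm
  have hsplit : T.card ≤ ks - 1 ∨ mp ≤ T.card := by
    by_contra hc
    push_neg at hc
    exact mpmin T.card (by omega) hc.2 htight
  rcases hsplit with hA | hB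
  · -- both not in T
    have hno : ∀ t ∈ T, (t : ℕ) < ks - 1 := by
      intro t ht
      by_contra hge
      push_neg at hge
      have hm1 : 1 ≤ T.card := Finset.card_pos.mpr ⟨t, ht⟩
      have hk11 : 1 ≤ ks - 1 := by omega
      have hasc : y ⟨ks-2, by omega⟩ < y ⟨ks-1, by omega⟩ := by
        have he : ks - 2 + 1 = ks - 1 := by omega
        have := ascent hsum hub (l := ks-2) (by omega) (by rw [he]; exact km1)
        have he2 : (⟨ks-2+1, by omega⟩ : Fin (n+1)) = ⟨ks-1, by omega⟩ := by
          apply Fin.ext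
          show ks - 2 + 1 = ks - 1
          omega
        rwa [he2] at this
      obtain ⟨j, hj⟩ := (T.orderIsoOfFin rfl).surjective ⟨t, ht⟩
      have hjt : enum T j = t := congrArg Subtype.val hj
      have h1 : y t ≤ y ⟨ks-2, by omega⟩ := by
        rw [← hjt, hpw j]
        apply hmono
        have : (j : ℕ) < T.card := j.2
        rw [Fin.le_def]
        show (Fin.castLE (card_le_n1 T) j : ℕ) ≤ ks - 2
        rw [Fin.coe_castLE]
        omega
      have h2 : y ⟨ks-1, by omega⟩ ≤ y t := by
        apply hmono
        rw [Fin.le_def]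
        show ks - 1 ≤ (t:ℕ)
        exact hge
      linarith
    constructor
    · intro h
      have := hno _ h
      simp only [Fin.val_mk] at this
      omega
    · intro h
      have := hno _ h
      simp only [Fin.val_mk] at this
      omega
  · -- both in T
    by_cases hmpe : mp = n+1
    · have hTu : T = Finset.univ := by
        apply Finset.eq_univ_of_card
        simp only [Fintype.card_fin]
        omega
      simp [hTu]
    · have hmpn : mp ≤ n := by omega
      have hasc : y ⟨mp-1, by omega⟩ < y ⟨mp, by omega⟩ := by
        have he : mp - 1 + 1 = mp := by omega
        have := ascent hsum hub (l := mp-1) (by omega) (by rw [he]; exact mp3)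
        have he2 : (⟨mp-1+1, by omega⟩ : Fin (n+1)) = ⟨mp, by omega⟩ := by
          apply Fin.ext
          show mp - 1 + 1 = mp
          omega
        rwa [he2] at this
      have hin : ∀ r : Fin (n+1), (r:ℕ) ≤ ks → r ∈ T := by
        intro r hr
        by_contra hrT
        have climb : ∀ v, (r:ℕ) ≤ v → ∀ j : Fin T.card, (j:ℕ) = v → v + 1 ≤ (enum T j : ℕ) := by
          intro v
          induction v with
          | zero =>
            intro _ j _
            have h0 := enum_ge T j
            have hne2 : enum T j ≠ r := fun he => hrT (he ▸ enum_mem T j)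
            have hne3 : (enum T j : ℕ) ≠ (r:ℕ) := fun hv' => hne2 (Fin.ext hv')
            omega
          | succ v ih =>
            intro hv j hj
            by_cases hrv : (r:ℕ) ≤ v
            · have hvm : v < T.card := by
                have : (j:ℕ) < T.card := j.2
                omega
              have hlt : (⟨v, hvm⟩ : Fin T.card) < j := by
                rw [Fin.lt_def]
                simp
                omega
              have h1 := ih hrv ⟨v, hvm⟩ rfl
              have h2 : (enum T ⟨v, hvm⟩ : ℕ) < (enum T j : ℕ) :=
                Fin.lt_def.mp (enum_strictMono T hlt)
              omega
            · have h0 := enum_ge T j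
              have hne2 : enum T j ≠ r := fun he => hrT (he ▸ enum_mem T j)
              have hne3 : (enum T j : ℕ) ≠ (r:ℕ) := fun hv' => hne2 (Fin.ext hv')
              omega
        have hj0 : mp - 1 < T.card := by omega
        have hcl := climb (mp-1) (by omega) ⟨mp-1, hj0⟩ rfl
        have h1 : y ⟨mp, by omega⟩ ≤ y (enum T ⟨mp-1, hj0⟩) := by
          apply hmono
          rw [Fin.le_def]
          show mp ≤ (enum T ⟨mp-1, hj0⟩ : ℕ)
          omega
        have h2 : y (enum T ⟨mp-1, hj0⟩) = y (Fin.castLE (card_le_n1 T) ⟨mp-1, hj0⟩) := hpw _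
        have h3 : (Fin.castLE (card_le_n1 T) ⟨mp-1, hj0⟩ : Fin (n+1)) = ⟨mp-1, by omega⟩ :=
          Fin.ext rfl
        rw [h3] at h2
        linarith
      have hp := hin ⟨ks-1, by omega⟩ (by show ks - 1 ≤ ks; omega)
      have hq := hin ⟨ks, by omega⟩ (by show ks ≤ ks; omega)
      exact iff_of_true hp hq
end Key
section Aux8
variable {n : ℕ}

lemma PH_perm (σ : Equiv.Perm (Fin (n+1))) {x : H0 n} (hx : x ∈ PH n) :
    permAct n σ x ∈ PH n := by
  intro S
  classical
  have hinj : Function.Injective (σ⁻¹ : Equiv.Perm (Fin (n+1))) := (σ⁻¹).injective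
  have h1 : ∑ i ∈ S, (permAct n σ x : Amb n) i = ∑ a ∈ S.image (σ⁻¹ : Equiv.Perm (Fin (n+1))), (x : Amb n) a := by
    rw [Finset.sum_image (fun a _ b _ h => hinj h)]
    rfl
  rw [h1]
  have h2 := hx (S.image (σ⁻¹ : Equiv.Perm (Fin (n+1))))
  rwa [Finset.card_image_of_injective _ hinj] at h2

lemma extreme_perm (σ : Equiv.Perm (Fin (n+1))) {x : H0 n}
    (hx : x ∈ Set.extremePoints ℝ (PH n)) :
    permAct n σ x ∈ Set.extremePoints ℝ (PH n) := by
  refine ⟨PH_perm σ hx.1, ?_⟩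
  intro x₁ h₁ x₂ h₂ hseg
  obtain ⟨a, b, ha, hb, hab, hcomb⟩ := hseg
  have hseg' : x ∈ openSegment ℝ (permAct n σ⁻¹ x₁) (permAct n σ⁻¹ x₂) := by
    refine ⟨a, b, ha, hb, hab, ?_⟩
    rw [← permAct_smul, ← permAct_smul, ← permAct_add, hcomb, permAct_mul]
    rw [inv_mul_cancel]
    exact permAct_one x
  have hres := hx.2 (PH_perm σ⁻¹ h₁) (PH_perm σ⁻¹ h₂) hseg'
  have := congrArg (permAct n σ) hres
  rwa [permAct_mul, mul_inv_cancel, permAct_one] at this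

lemma coord_add_smul (x d : H0 n) (c : ℝ) (i : Fin (n+1)) :
    ((x + c • d : H0 n) : Amb n) i = (x : Amb n) i + c * (d : Amb n) i := by
  simp only [Submodule.coe_add, Submodule.coe_smul, PiLp.add_apply, PiLp.smul_apply, smul_eq_mul]

lemma not_extreme_of_pq (x : H0 n) (hx : x ∈ PH n) (p q : Fin (n+1)) (hpq : p ≠ q)
    (h : ∀ S : Finset (Fin (n+1)), ∑ i ∈ S, (x : Amb n) i = Fb n S.card → (p ∈ S ↔ q ∈ S)) :
    x ∉ Set.extremePoints ℝ (PH n) := by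
  classical
  set d : H0 n := lamb n p - lamb n q with hd
  have hdco : ∀ i, (d : Amb n) i = (if i = p then (1:ℝ) else 0) - (if i = q then (1:ℝ) else 0) := by
    intro i
    rw [hd]
    show (lamb n p : Amb n) i - (lamb n q : Amb n) i = _
    rw [lamb_coe, lamb_coe]
    ring
  have hdsum : ∀ S : Finset (Fin (n+1)), ∑ i ∈ S, (d : Amb n) i
      = (if p ∈ S then (1:ℝ) else 0) - (if q ∈ S then (1:ℝ) else 0) := by
    intro S
    have : ∑ i ∈ S, (d : Amb n) i = ∑ i ∈ S, ((if i = p then (1:ℝ) else 0) - (if i = q then (1:ℝ) else 0)) :=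
      Finset.sum_congr rfl fun i _ => hdco i
    rw [this, Finset.sum_sub_distrib, Finset.sum_ite_eq' S p (fun _ => (1:ℝ)),
      Finset.sum_ite_eq' S q (fun _ => (1:ℝ))]
  have hdne : d ≠ 0 := by
    intro h0
    have := hdco p
    rw [h0] at this
    simp only [Submodule.coe_zero, PiLp.zero_apply] at this
    simp [hpq] at this
  set Sbad := Finset.univ.filter (fun S : Finset (Fin (n+1)) => ¬(p ∈ S ↔ q ∈ S)) with hSbad
  have hSne : Sbad.Nonempty := by
    refine ⟨{p}, Finset.mem_filter.mpr ⟨Finset.mem_univ _, ?_⟩⟩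
    intro hiff
    have hq : q ∈ ({p} : Finset (Fin (n+1))) := hiff.mp (Finset.mem_singleton_self p)
    exact hpq (Finset.mem_singleton.mp hq).symm
  set ε := Sbad.inf' hSne (fun S => Fb n S.card - ∑ i ∈ S, (x : Amb n) i) with hε
  have hεpos : 0 < ε := by
    rw [hε, Finset.lt_inf'_iff]
    intro S hS
    have hSb := (Finset.mem_filter.mp hS).2
    have hle := hx S
    rcases lt_or_eq_of_le hle with hlt | heq
    · linarith
    · exact absurd (h S heq) hSb
  have hmem : ∀ t : ℝ, |t| ≤ ε → x + t • d ∈ PH n := by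
    intro t ht S
    have hs : ∑ i ∈ S, ((x + t • d : H0 n) : Amb n) i
        = ∑ i ∈ S, (x : Amb n) i + t * (∑ i ∈ S, (d : Amb n) i) := by
      rw [Finset.mul_sum, ← Finset.sum_add_distrib]
      exact Finset.sum_congr rfl fun i _ => coord_add_smul x d t i
    rw [hs, hdsum S]
    by_cases hiff : p ∈ S ↔ q ∈ S
    · have : (if p ∈ S then (1:ℝ) else 0) - (if q ∈ S then (1:ℝ) else 0) = 0 := by
        by_cases hp : p ∈ S
        · rw [if_pos hp, if_pos (hiff.mp hp)]; ring
        · rw [if_neg hp, if_neg (fun hq => hp (hiff.mpr hq))]; ring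
      rw [this, mul_zero, add_zero]
      exact hx S
    · have hSmem : S ∈ Sbad := Finset.mem_filter.mpr ⟨Finset.mem_univ _, hiff⟩
      have hslack := Finset.inf'_le (fun S => Fb n S.card - ∑ i ∈ S, (x : Amb n) i) hSmem
      have habs : |(if p ∈ S then (1:ℝ) else 0) - (if q ∈ S then (1:ℝ) else 0)| ≤ 1 := by
        by_cases hp : p ∈ S <;> by_cases hq : q ∈ S <;> simp [hp, hq]
      have : t * ((if p ∈ S then (1:ℝ) else 0) - (if q ∈ S then (1:ℝ) else 0)) ≤ ε := by
        calc t * _ ≤ |t * ((if p ∈ S then (1:ℝ) else 0) - (if q ∈ S then (1:ℝ) else 0))| :=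
              le_abs_self _
          _ = |t| * |(if p ∈ S then (1:ℝ) else 0) - (if q ∈ S then (1:ℝ) else 0)| := abs_mul _ _
          _ ≤ ε * 1 := by
              apply mul_le_mul ht habs (abs_nonneg _) (le_of_lt hεpos)
          _ = ε := mul_one ε
      linarith [hslack]
  have h1 : x + ε • d ∈ PH n := hmem ε (by rw [abs_of_pos hεpos])
  have h2 : x + (-ε) • d ∈ PH n := hmem (-ε) (by rw [abs_neg, abs_of_pos hεpos])
  intro hxe
  have hseg : x ∈ openSegment ℝ (x + ε • d) (x + (-ε) • d) := by
    refine ⟨1/2, 1/2, by norm_num, by norm_num, by norm_num, ?_⟩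
    module
  have hres := hxe.2 h1 h2 hseg
  have : ε • d = 0 := by
    have h3 := hres
    have : x + ε • d - x = 0 := by rw [h3]; abel
    rwa [add_sub_cancel_left] at this
  rcases smul_eq_zero.mp this with h4 | h4
  · exact absurd h4 (ne_of_gt hεpos)
  · exact hdne h4

lemma Gb_diff (l : ℕ) : Gb n (l+1) - Gb n l = (2*(l:ℝ) - n)/(2*((n:ℝ)+1)) := by
  rw [Gb, Gb]
  have hpos : ((n:ℝ)+1) ≠ 0 := by positivity
  push_cast
  field_simp
  ring

lemma eq_ctr_of_all_tight {x : H0 n} (hx : x ∈ PH n)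
    (hall : ∀ m, 1 ≤ m → m ≤ n → Bk2 (fun i => (x : Amb n) i) m = Gb n m) :
    x = ctr n := by
  have htight : ∀ m, m ≤ n+1 → Bk2 (fun i => (x : Amb n) i) m = Gb n m := by
    intro m hm
    rcases Nat.eq_zero_or_pos m with rfl | h1
    · rw [Bk2_zero, Gb_zero]
    · rcases Nat.lt_or_ge m (n+1) with h2 | h2
      · exact hall m h1 (by omega)
      · have : m = n+1 := by omega
        rw [this, Bk2_total, Gb_total]
        exact H0_sum x
  apply Subtype.ext
  apply PiLp.ext; intro i
  have hl : (i:ℕ) + 1 ≤ n + 1 := i.2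
  have e1 : Bk2 (fun i => (x : Amb n) i) ((i:ℕ)+1)
      = Bk2 (fun i => (x : Amb n) i) (i:ℕ) + (x : Amb n) ⟨(i:ℕ), i.2⟩ := by
    rw [Bk2_eq _ hl, Bk2_eq _ (by omega : (i:ℕ) ≤ n+1)]
    exact Bk_succ _ _
  have e2 := htight ((i:ℕ)+1) hl
  have e3 := htight (i:ℕ) (by omega)
  have e4 : (x : Amb n) ⟨(i:ℕ), i.2⟩ = Gb n ((i:ℕ)+1) - Gb n (i:ℕ) := by
    rw [← e2, ← e3, e1]; ring
  have e5 : (⟨(i:ℕ), i.2⟩ : Fin (n+1)) = i := Fin.ext rfl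
  rw [e5] at e4
  rw [e4, Gb_diff]
  rw [ctr_coe]

end Aux8
section Aux9
variable {n : ℕ}

lemma extreme_sub_vertices :
    Set.extremePoints ℝ (PH n) ⊆ {x : H0 n | ∃ σ, x = permAct n σ (ctr n)} := by
  intro x hxe
  classical
  set τ := Tuple.sort (fun i => (x : Amb n) i) with hτ
  set x' := permAct n τ⁻¹ x with hx'def
  have hco : ∀ i, (x' : Amb n) i = (x : Amb n) (τ i) := by
    intro i
    rw [hx'def, permAct_coe, inv_inv]
  have hmono : Monotone (fun i => (x' : Amb n) i) := by
    have := Tuple.monotone_sort (fun i => (x : Amb n) i)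
    intro a b hab
    show (x' : Amb n) a ≤ (x' : Amb n) b
    rw [hco a, hco b]
    exact this hab
  have hx'e : x' ∈ Set.extremePoints ℝ (PH n) := extreme_perm τ⁻¹ hxe
  have hx' : x' ∈ PH n := hx'e.1
  by_cases hall : ∀ m, 1 ≤ m → m ≤ n → Bk2 (fun i => (x' : Amb n) i) m = Gb n m
  · have hctr : x' = ctr n := eq_ctr_of_all_tight hx' hall
    refine ⟨τ, ?_⟩
    have := congrArg (permAct n τ) hctr
    rw [permAct_mul, mul_inv_cancel, permAct_one] at this
    exact this
  · push_neg at hall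
    obtain ⟨m, h1, h2, h3⟩ := hall
    obtain ⟨p, q, hpq, hkey⟩ := key_claim hmono (H0_sum x')
      (fun S => hx' S) ⟨m, h1, h2, h3⟩
    exact absurd hx'e (not_extreme_of_pq x' hx' p q hpq hkey)

lemma vertex_set_finite :
    ({x : H0 n | ∃ σ, x = permAct n σ (ctr n)}).Finite := by
  have : {x : H0 n | ∃ σ, x = permAct n σ (ctr n)}
      = Set.range (fun σ : Equiv.Perm (Fin (n+1)) => permAct n σ (ctr n)) := by
    ext v
    simp [Set.mem_setOf_eq, Set.mem_range, eq_comm]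
  rw [this]
  exact Set.finite_range _

lemma PH_subset_Perm : PH n ⊆ Perm n := by
  have hKM := closure_convexHull_extremePoints compact_PH (convex_PH (n := n))
  intro x hx
  rw [← hKM] at hx
  have h1 : closure (convexHull ℝ (Set.extremePoints ℝ (PH n)))
      ⊆ closure (convexHull ℝ {x : H0 n | ∃ σ, x = permAct n σ (ctr n)}) :=
    closure_mono (convexHull_mono extreme_sub_vertices)
  have h2 : closure (convexHull ℝ {x : H0 n | ∃ σ, x = permAct n σ (ctr n)})
      = convexHull ℝ {x : H0 n | ∃ σ, x = permAct n σ (ctr n)} :=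
    IsClosed.closure_eq ((vertex_set_finite.isCompact_convexHull ℝ).isClosed)
  have := h1 hx
  rw [h2] at this
  exact this

lemma Perm_eq_PH : Perm n = PH n :=
  le_antisymm Perm_subset_PH PH_subset_Perm

end Aux9
section Lat
variable {n : ℕ}

/-- integer pairwise differences -/
def hasIntDiffs (μ : H0 n) : Prop :=
  ∀ i j : Fin (n+1), ∃ m : ℤ, (μ : Amb n) i - (μ : Amb n) j = m

lemma latL_intDiffs {μ : H0 n} (hμ : μ ∈ latL n) : hasIntDiffs μ := by
  refine AddSubgroup.closure_induction (fun x hx => ?_) ?_ (fun x y _ _ ihx ihy => ?_)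
    (fun x _ ihx => ?_) hμ
  · obtain ⟨i0, rfl⟩ := hx
    intro i j
    refine ⟨(if i = i0 then 1 else 0) - (if j = i0 then 1 else 0), ?_⟩
    rw [lamb_coe, lamb_coe]
    push_cast
    split_ifs <;> ring
  · intro i j
    exact ⟨0, by simp⟩
  · intro i j
    obtain ⟨m1, hm1⟩ := ihx i j
    obtain ⟨m2, hm2⟩ := ihy i j
    refine ⟨m1 + m2, ?_⟩
    have hc : ((x + y : H0 n) : Amb n) i = (x : Amb n) i + (y : Amb n) i := rfl
    have hc' : ((x + y : H0 n) : Amb n) j = (x : Amb n) j + (y : Amb n) j := rfl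
    rw [hc, hc']
    push_cast
    linarith
  · intro i j
    obtain ⟨m1, hm1⟩ := ihx i j
    refine ⟨-m1, ?_⟩
    have hc : ((-x : H0 n) : Amb n) i = -(x : Amb n) i := rfl
    have hc' : ((-x : H0 n) : Amb n) j = -(x : Amb n) j := rfl
    rw [hc, hc']
    push_cast
    linarith

lemma coe_sum_H0 {ι : Type*} (s : Finset ι) (f : ι → H0 n) :
    ((∑ j ∈ s, f j : H0 n) : Amb n) = ∑ j ∈ s, ((f j : Amb n)) :=
  map_sum (H0 n).subtype f s

lemma intDiffs_latL {μ : H0 n} (hμ : hasIntDiffs μ) : μ ∈ latL n := by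
  classical
  choose mm hmm using hμ
  set z : Fin (n+1) → ℤ := fun j => mm j 0 with hz
  have hzc : ∀ j, (μ : Amb n) j - (μ : Amb n) 0 = (z j : ℝ) := fun j => hmm j 0
  have hu : (∑ j, ((z j : ℝ))) + ((n:ℝ)+1) * ((μ : Amb n) 0) = 0 := by
    have h1 : ∑ j, ((μ : Amb n) j - (μ : Amb n) 0) = ∑ j, ((z j : ℝ)) :=
      Finset.sum_congr rfl fun j _ => hzc j
    rw [Finset.sum_sub_distrib, H0_sum μ, Finset.sum_const, Finset.card_univ,
      Fintype.card_fin, nsmul_eq_mul] at h1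
    push_cast at h1 ⊢
    linarith
  have hkey : μ = ∑ j, (z j) • lamb n j := by
    apply Subtype.ext
    rw [coe_sum_H0]
    apply PiLp.ext; intro i
    have h2 : (∑ j, ((z j • lamb n j : H0 n) : Amb n)) i
        = ∑ j, (z j : ℝ) * ((lamb n j : Amb n) i) := by
      rw [WithLp.ofLp_sum, Finset.sum_apply]
      apply Finset.sum_congr rfl
      intro j _
      have h0 : (z j • lamb n j : H0 n) = (z j : ℝ) • lamb n j := by
        rw [Int.cast_smul_eq_zsmul]
      rw [h0, Submodule.coe_smul]
      rfl
    show (μ : Amb n) i = _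
    rw [h2]
    have h3 : ∀ j, (z j : ℝ) * ((lamb n j : Amb n) i)
        = (if i = j then (z j : ℝ) else 0) - (z j : ℝ)/((n:ℝ)+1) := by
      intro j
      rw [lamb_coe]
      split_ifs <;> ring
    rw [Finset.sum_congr rfl fun j _ => h3 j, Finset.sum_sub_distrib,
      Finset.sum_ite_eq Finset.univ i (fun j => (z j : ℝ)), if_pos (Finset.mem_univ i),
      ← Finset.sum_div]
    have h4 : (μ : Amb n) i = (z i : ℝ) + (μ : Amb n) 0 := by
      have := hzc i
      linarith
    rw [h4]
    have hpos : ((n:ℝ)+1) ≠ 0 := by positivity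
    field_simp
    linarith [hu]
  rw [hkey]
  apply AddSubgroup.sum_mem
  intro j _
  exact AddSubgroup.zsmul_mem _ (AddSubgroup.subset_closure (Set.mem_range_self j)) (z j)

lemma latL_closed : IsClosed ((latL n : Set (H0 n))) := by
  have heq : (latL n : Set (H0 n)) =
      ⋂ i : Fin (n+1), ⋂ j : Fin (n+1),
        (fun μ : H0 n => (μ : Amb n) i - (μ : Amb n) j) ⁻¹' (Set.range ((↑) : ℤ → ℝ)) := by
    ext μ
    simp only [Set.mem_iInter, Set.mem_preimage, Set.mem_range, SetLike.mem_coe]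
    constructor
    · intro h i j
      obtain ⟨m, hm⟩ := latL_intDiffs h i j
      exact ⟨m, hm.symm⟩
    · intro h
      apply intDiffs_latL
      intro i j
      obtain ⟨m, hm⟩ := h i j
      exact ⟨m, hm.symm⟩
  rw [heq]
  refine isClosed_iInter fun i => isClosed_iInter fun j => IsClosed.preimage ?_ ?_
  · exact Continuous.sub ((continuous_apply i).comp ((PiLp.continuous_ofLp ..).comp continuous_subtype_val))
      ((continuous_apply j).comp ((PiLp.continuous_ofLp ..).comp continuous_subtype_val))
  · exact Int.isClosedEmbedding_coe_real.isClosed_range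

end Lat
section VorSec
variable {n : ℕ}

lemma inner_H0 (u v : H0 n) : (inner ℝ u v : ℝ) = ∑ i, (u : Amb n) i * (v : Amb n) i := by
  rw [Submodule.coe_inner, PiLp.inner_apply]
  apply Finset.sum_congr rfl
  intro i _
  simp [RCLike.inner_apply, conj_trivial, mul_comm]

/-- The (infinite-constraint) Voronoi region of the lattice. -/
def Vor (n : ℕ) : Set (H0 n) :=
  {z | ∀ μ ∈ latL n, 2 * (inner ℝ z μ : ℝ) ≤ ‖μ‖^2}

lemma Vor_convex : Convex ℝ (Vor n) := by
  intro x hx y hy a b ha hb hab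
  intro μ hμ
  have h1 := hx μ hμ
  have h2 := hy μ hμ
  have h3 : (inner ℝ (a • x + b • y) μ : ℝ) = a * (inner ℝ x μ : ℝ) + b * (inner ℝ y μ : ℝ) := by
    rw [inner_add_left]; exact congrArg₂ (· + ·) (real_inner_smul_left x μ a) (real_inner_smul_left y μ b)
  rw [h3]
  have e1 := mul_le_mul_of_nonneg_left h1 ha
  have e2 := mul_le_mul_of_nonneg_left h2 hb
  have e : a * ‖μ‖^2 + b * ‖μ‖^2 = ‖μ‖^2 := by rw [← add_mul, hab, one_mul]
  linarith

/-- integer inequality: key to vertices being in the Voronoi cell -/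
lemma int_ineq (z : Fin (n+1) → ℤ) (π : Equiv.Perm (Fin (n+1))) :
    ∑ i, z i * (2 * ((π i : ℕ) : ℤ) - n) + (∑ i, z i)^2 ≤ ((n:ℤ)+1) * ∑ i, (z i)^2 := by
  classical
  set s : Fin (n+1) → Fin (n+1) → ℤ :=
    fun i j => (if π j < π i then 1 else 0) - (if π i < π j then 1 else 0) with hs
  have hcard : ∀ i, ∑ j, s i j = 2 * ((π i : ℕ) : ℤ) - n := by
    intro i
    rw [Finset.sum_sub_distrib]
    have c1 : ∑ j, (if π j < π i then (1:ℤ) else 0) = ((π i : ℕ) : ℤ) := by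
      rw [Finset.sum_boole]
      have hbij : (Finset.univ.filter (fun j => π j < π i)).card
          = (Finset.univ.filter (fun j => j < π i)).card := by
        apply Finset.card_bij (fun j _ => π j)
        · intro a ha
          simp only [Finset.mem_filter, Finset.mem_univ, true_and] at ha ⊢
          exact ha
        · intro a _ b _ hab
          exact π.injective hab
        · intro b hb
          simp only [Finset.mem_filter, Finset.mem_univ, true_and] at hb ⊢
          exact ⟨π.symm b, by simpa using hb, by simp⟩
      have hIio : Finset.univ.filter (fun j => j < π i) = Finset.Iio (π i) := by
        ext j
        simp [Finset.mem_Iio]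
      rw [hbij, hIio, Fin.card_Iio]
    have c2 : ∑ j, (if π i < π j then (1:ℤ) else 0) = (n:ℤ) - ((π i : ℕ) : ℤ) := by
      rw [Finset.sum_boole]
      have hbij : (Finset.univ.filter (fun j => π i < π j)).card
          = (Finset.univ.filter (fun j => π i < j)).card := by
        apply Finset.card_bij (fun j _ => π j)
        · intro a ha
          simp only [Finset.mem_filter, Finset.mem_univ, true_and] at ha ⊢
          exact ha
        · intro a _ b _ hab
          exact π.injective hab
        · intro b hb
          simp only [Finset.mem_filter, Finset.mem_univ, true_and] at hb ⊢
          exact ⟨π.symm b, by simpa using hb, by simp⟩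
      have hIoi : Finset.univ.filter (fun j => π i < j) = Finset.Ioi (π i) := by
        ext j
        simp [Finset.mem_Ioi]
      rw [hbij, hIoi, Fin.card_Ioi]
      have : ((π i : ℕ)) ≤ n := by omega
      push_cast [Nat.cast_sub this]
      ring
    rw [c1, c2]
    ring
  have antisym : ∀ i j, s j i = - s i j := by
    intro i j
    simp only [hs]
    ring
  have htermwise : ∀ i j, s i j * (z i - z j) ≤ (z i - z j)^2 := by
    intro i j
    rcases lt_trichotomy (π i) (π j) with h | h | h
    · have : s i j = -1 := by simp [hs, h, asymm h]
      rw [this]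
      nlinarith [sq_nonneg (2*(z i - z j) + 1)]
    · have : s i j = 0 := by simp [hs, h]
      rw [this, zero_mul]
      exact sq_nonneg _
    · have : s i j = 1 := by simp [hs, h, asymm h]
      rw [this]
      nlinarith [sq_nonneg (2*(z i - z j) - 1)]
  have hA : ∑ i, ∑ j, (z i - z j)^2
      = 2*(((n:ℤ)+1) * ∑ i, (z i)^2) - 2*(∑ i, z i)^2 := by
    have e1 : ∀ i : Fin (n+1), ∑ j, (z i - z j)^2
        = ((n:ℤ)+1)*(z i)^2 - 2*(z i)*(∑ j, z j) + ∑ j, (z j)^2 := by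
      intro i
      have h1 : ∀ j : Fin (n+1), (z i - z j)^2 = (z i)^2 - 2*(z i)*(z j) + (z j)^2 :=
        fun j => by ring
      rw [Finset.sum_congr rfl fun j _ => h1 j, Finset.sum_add_distrib,
        Finset.sum_sub_distrib, Finset.sum_const, Finset.card_univ, Fintype.card_fin,
        ← Finset.mul_sum]
      push_cast
      ring
    have e2 : ∑ i, ∑ j, (z i - z j)^2
        = ∑ i, (((n:ℤ)+1)*(z i)^2 - 2*(z i)*(∑ j, z j) + ∑ j, (z j)^2) :=
      Finset.sum_congr rfl fun i _ => e1 i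
    have t1 : ∑ i : Fin (n+1), ((n:ℤ)+1)*(z i)^2 = ((n:ℤ)+1) * ∑ i, (z i)^2 :=
      (Finset.mul_sum _ _ _).symm
    have t2 : ∑ i : Fin (n+1), 2*(z i)*(∑ j, z j) = 2*(∑ i, z i)*(∑ j, z j) := by
      rw [← Finset.sum_mul, ← Finset.mul_sum]
    have t3 : ∑ _i : Fin (n+1), (∑ j, (z j)^2) = ((n:ℤ)+1) * ∑ j, (z j)^2 := by
      rw [Finset.sum_const, Finset.card_univ, Fintype.card_fin, nsmul_eq_mul]
      push_cast
      ring
    rw [e2, Finset.sum_add_distrib, Finset.sum_sub_distrib, t1, t2, t3]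
    ring
  have hB : ∑ i, ∑ j, s i j * (z i - z j) = 2 * ∑ i, z i * (2*((π i : ℕ):ℤ) - n) := by
    have hsplit : ∑ i, ∑ j, s i j * (z i - z j)
        = ∑ i, ∑ j, s i j * z i - ∑ i, ∑ j, s i j * z j := by
      rw [← Finset.sum_sub_distrib]
      apply Finset.sum_congr rfl
      intro i _
      rw [← Finset.sum_sub_distrib]
      apply Finset.sum_congr rfl
      intro j _
      ring
    have hfirst : ∑ i, ∑ j, s i j * z i = ∑ i, z i * (2*((π i : ℕ):ℤ) - n) := by
      apply Finset.sum_congr rfl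
      intro i _
      rw [← Finset.sum_mul, hcard i, mul_comm]
    have hsecond : ∑ i, ∑ j, s i j * z j = - ∑ i, z i * (2*((π i : ℕ):ℤ) - n) := by
      rw [Finset.sum_comm]
      have hcol : ∀ j, ∑ i, s i j = -(2*((π j : ℕ):ℤ) - n) := by
        intro j
        have h5 : ∑ i, s i j = ∑ i, -(s j i) :=
          Finset.sum_congr rfl fun i _ => by rw [antisym j i]
        rw [h5, Finset.sum_neg_distrib, hcard j]
      calc ∑ j, ∑ i, s i j * z j = ∑ j, (∑ i, s i j) * z j := by
            apply Finset.sum_congr rfl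
            intro j _
            rw [Finset.sum_mul]
        _ = ∑ j, (-(2*((π j : ℕ):ℤ) - n)) * z j := by
            apply Finset.sum_congr rfl
            intro j _
            rw [hcol j]
        _ = - ∑ j, z j * (2*((π j : ℕ):ℤ) - n) := by
            rw [← Finset.sum_neg_distrib]
            apply Finset.sum_congr rfl
            intro j _
            ring
    rw [hsplit, hfirst, hsecond]
    ring
  have hle : ∑ i, ∑ j, s i j * (z i - z j) ≤ ∑ i, ∑ j, (z i - z j)^2 :=
    Finset.sum_le_sum fun i _ => Finset.sum_le_sum fun j _ => htermwise i j
  linarith [hA, hB, hle]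

end VorSec
section VertexVor
variable {n : ℕ}

lemma vertex_Vor (σ : Equiv.Perm (Fin (n+1))) : permAct n σ (ctr n) ∈ Vor n := by
  classical
  intro μ hμ
  choose mm hmm using latL_intDiffs hμ
  set z : Fin (n+1) → ℤ := fun j => mm j 0 with hzdef
  have hzc : ∀ j, (μ : Amb n) j = (z j : ℝ) + (μ : Amb n) 0 := by
    intro j
    have := hmm j 0
    show _ = (mm j 0 : ℝ) + _
    linarith
  set u : ℝ := (μ : Amb n) 0 with hudef
  set Z1 : ℝ := ∑ j, ((z j : ℝ)) with hZ1
  set Z2 : ℝ := ∑ j, ((z j : ℝ))^2 with hZ2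
  set W : ℝ := ∑ i, (z i : ℝ) * (2*(((σ⁻¹ i : Fin (n+1)) : ℕ):ℝ) - n) with hW
  have hpos : (0:ℝ) < (n:ℝ)+1 := by positivity
  have hurel : Z1 + ((n:ℝ)+1)*u = 0 := by
    have h1 : ∑ j, (μ : Amb n) j = ∑ j, ((z j : ℝ) + u) :=
      Finset.sum_congr rfl fun j _ => hzc j
    rw [H0_sum μ, Finset.sum_add_distrib, Finset.sum_const, Finset.card_univ,
      Fintype.card_fin, nsmul_eq_mul] at h1
    rw [hZ1]
    push_cast at h1 ⊢
    linarith
  have hv : ∀ i, (permAct n σ (ctr n) : Amb n) i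
      = (2*(((σ⁻¹ i : Fin (n+1)) : ℕ):ℝ) - n)/(2*((n:ℝ)+1)) := by
    intro i
    rw [permAct_coe, ctr_coe]
  have hvsum : ∑ i, (permAct n σ (ctr n) : Amb n) i = 0 := H0_sum _
  have hinner : (inner ℝ (permAct n σ (ctr n)) μ : ℝ) = W/(2*((n:ℝ)+1)) := by
    rw [inner_H0]
    have h2 : ∀ i, (permAct n σ (ctr n) : Amb n) i * (μ : Amb n) i
        = (permAct n σ (ctr n) : Amb n) i * (z i : ℝ)
          + (permAct n σ (ctr n) : Amb n) i * u := by
      intro i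
      rw [hzc i]
      ring
    rw [Finset.sum_congr rfl fun i _ => h2 i, Finset.sum_add_distrib,
      ← Finset.sum_mul, hvsum, zero_mul, add_zero]
    have h3 : ∀ i, (permAct n σ (ctr n) : Amb n) i * (z i : ℝ)
        = ((z i : ℝ) * (2*(((σ⁻¹ i : Fin (n+1)) : ℕ):ℝ) - n))/(2*((n:ℝ)+1)) := by
      intro i
      rw [hv i]
      ring
    rw [Finset.sum_congr rfl fun i _ => h3 i, ← Finset.sum_div]
  have hnormsq : ‖μ‖^2 = Z2 + 2*u*Z1 + ((n:ℝ)+1)*u^2 := by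
    rw [← real_inner_self_eq_norm_sq, inner_H0]
    have h4 : ∀ i, (μ : Amb n) i * (μ : Amb n) i
        = (z i : ℝ)^2 + 2*u*(z i : ℝ) + u^2 := by
      intro i
      rw [hzc i]
      ring
    rw [Finset.sum_congr rfl fun i _ => h4 i, Finset.sum_add_distrib,
      Finset.sum_add_distrib, Finset.sum_const, Finset.card_univ, Fintype.card_fin,
      nsmul_eq_mul, ← Finset.mul_sum]
    rw [hZ2, hZ1]
    push_cast
    ring
  have hint := int_ineq z σ⁻¹
  have hcast : W + Z1^2 ≤ ((n:ℝ)+1) * Z2 := by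
    rw [hW, hZ1, hZ2]
    exact_mod_cast hint
  rw [hinner, hnormsq]
  have hg1 : 2 * (W/(2*((n:ℝ)+1))) = W/((n:ℝ)+1) := by
    field_simp
  have hu2 : u = -Z1/((n:ℝ)+1) := by
    field_simp
    linarith
  have hg2 : Z2 + 2*u*Z1 + ((n:ℝ)+1)*u^2 = (((n:ℝ)+1)*Z2 - Z1^2)/((n:ℝ)+1) := by
    rw [hu2]
    field_simp
    ring
  rw [hg1, hg2]
  apply div_le_div_of_nonneg_right ?_ hpos.le
  linarith

lemma Perm_subset_Vor : Perm n ⊆ Vor n := by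
  apply convexHull_min _ Vor_convex
  rintro v ⟨σ, rfl⟩
  exact vertex_Vor σ

end VertexVor
section Fin13
variable {n : ℕ}

/-- lattice vector attached to a subset -/
def muS (n : ℕ) (S : Finset (Fin (n+1))) : H0 n := ∑ j ∈ S, lamb n j

lemma muS_mem (S : Finset (Fin (n+1))) : muS n S ∈ latL n :=
  AddSubgroup.sum_mem _ fun j _ => AddSubgroup.subset_closure (Set.mem_range_self j)

lemma muS_coe (S : Finset (Fin (n+1))) (i : Fin (n+1)) :
    (muS n S : Amb n) i = (if i ∈ S then (1:ℝ) else 0) - (S.card : ℝ)/((n:ℝ)+1) := by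
  classical
  rw [muS, coe_sum_H0, WithLp.ofLp_sum, Finset.sum_apply]
  have h1 : ∀ j ∈ S, ((lamb n j : Amb n)) i
      = (if i = j then (1:ℝ) else 0) - 1/((n:ℝ)+1) := fun j _ => lamb_coe j i
  rw [Finset.sum_congr rfl h1, Finset.sum_sub_distrib,
    Finset.sum_ite_eq S i (fun _ => (1:ℝ)), Finset.sum_const, nsmul_eq_mul]
  ring

lemma inner_muS (y : H0 n) (S : Finset (Fin (n+1))) :
    (inner ℝ y (muS n S) : ℝ) = ∑ i ∈ S, (y : Amb n) i := by
  classical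
  rw [inner_H0]
  have h1 : ∀ i, (y : Amb n) i * (muS n S : Amb n) i
      = (if i ∈ S then (y : Amb n) i else 0) - ((S.card : ℝ)/((n:ℝ)+1)) * (y : Amb n) i := by
    intro i
    rw [muS_coe]
    split_ifs <;> ring
  rw [Finset.sum_congr rfl fun i _ => h1 i, Finset.sum_sub_distrib, ← Finset.mul_sum,
    H0_sum y, mul_zero, sub_zero, Finset.sum_ite_mem, Finset.univ_inter]

lemma normsq_muS (S : Finset (Fin (n+1))) : ‖muS n S‖^2 = 2 * Fb n S.card := by
  rw [← real_inner_self_eq_norm_sq, inner_muS]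
  have h1 : ∀ i ∈ S, (muS n S : Amb n) i = 1 - (S.card : ℝ)/((n:ℝ)+1) := by
    intro i hi
    rw [muS_coe, if_pos hi]
  rw [Finset.sum_congr rfl h1, Finset.sum_const, nsmul_eq_mul, Fb]
  have hk : (S.card : ℝ) ≤ (n:ℝ)+1 := by exact_mod_cast card_le_n1 S
  have hpos : ((n:ℝ)+1) ≠ 0 := by positivity
  field_simp

lemma cover (x : H0 n) : ∃ μ ∈ latL n, x ∈ tile n μ := by
  have hne : ((latL n : Set (H0 n))).Nonempty := ⟨0, (latL n).zero_mem⟩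
  obtain ⟨μ0, hμ0, hdist⟩ := latL_closed.exists_infDist_eq_dist hne x
  refine ⟨μ0, hμ0, ?_⟩
  have hmin : ∀ ν ∈ latL n, dist x μ0 ≤ dist x ν := by
    intro ν hν
    rw [← hdist]
    exact Metric.infDist_le_dist_of_mem hν
  set y := x - μ0 with hy
  have hyPH : y ∈ PH n := by
    intro S
    have h1 : dist x μ0 ≤ dist x (μ0 + muS n S) :=
      hmin _ (AddSubgroup.add_mem _ hμ0 (muS_mem S))
    have h2 : ‖y‖ ≤ ‖y - muS n S‖ := by
      rw [dist_eq_norm, dist_eq_norm] at h1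
      have e1 : x - (μ0 + muS n S) = y - muS n S := by rw [hy]; abel
      rw [e1] at h1
      exact h1
    have h3 : 2*(inner ℝ y (muS n S) : ℝ) ≤ ‖muS n S‖^2 := by
      have hid := norm_sub_sq_real y (muS n S)
      have h2sq := mul_self_le_mul_self (norm_nonneg y) h2
      nlinarith
    rw [inner_muS, normsq_muS] at h3
    linarith
  rw [tile]
  refine ⟨y, ?_, by rw [hy]; abel_nf⟩
  rw [Perm_eq_PH]
  exact hyPH

lemma disj {μ ν : H0 n} (hμ : μ ∈ latL n) (hν : ν ∈ latL n) (hne : μ ≠ ν) :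
    interior (tile n μ) ∩ interior (tile n ν) = ∅ := by
  rw [Set.eq_empty_iff_forall_notMem]
  rintro w ⟨hwμ, hwν⟩
  set d := ν - μ with hd
  have hd0 : d ≠ 0 := sub_ne_zero.mpr (Ne.symm hne)
  have hdlat : d ∈ latL n := AddSubgroup.sub_mem _ hν hμ
  have hdlat' : -d ∈ latL n := AddSubgroup.neg_mem _ hdlat
  -- inequalities
  have gle : ∀ u : H0 n, u ∈ tile n μ → 2*(inner ℝ (u - μ) d : ℝ) ≤ ‖d‖^2 := by
    rintro u ⟨z, hz, rfl⟩
    have hzv := Perm_subset_Vor hz d hdlat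
    have e1 : μ + z - μ = z := by abel
    rw [e1]
    exact hzv
  have gge : ∀ u : H0 n, u ∈ tile n ν → ‖d‖^2 ≤ 2*(inner ℝ (u - μ) d : ℝ) := by
    rintro u ⟨z, hz, rfl⟩
    have hzv := Perm_subset_Vor hz (-d) hdlat'
    rw [norm_neg] at hzv
    have e1 : ν + z - μ = z + d := by rw [hd]; abel
    rw [e1, inner_add_left]
    have e2 : (inner ℝ z (-d) : ℝ) = -(inner ℝ z d : ℝ) := by
      rw [inner_neg_right]
    rw [e2] at hzv
    have e3 : (inner ℝ d d : ℝ) = ‖d‖^2 := real_inner_self_eq_norm_sq d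
    linarith
  -- equality at interior points
  have heq : ∀ u : H0 n, u ∈ tile n μ → u ∈ tile n ν → 2*(inner ℝ (u - μ) d : ℝ) = ‖d‖^2 :=
    fun u h1 h2 => le_antisymm (gle u h1) (gge u h2)
  obtain ⟨ε1, hε1, hball1⟩ := Metric.isOpen_iff.mp isOpen_interior w hwμ
  obtain ⟨ε2, hε2, hball2⟩ := Metric.isOpen_iff.mp isOpen_interior w hwν
  set t := min ε1 ε2 / (2*(‖d‖+1)) with ht
  have hdn : (0:ℝ) < ‖d‖ := norm_pos_iff.mpr hd0
  have htpos : 0 < t := by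
    apply div_pos (lt_min hε1 hε2)
    positivity
  set w' := w + t • d with hw'
  have hwdist : dist w' w < min ε1 ε2 := by
    rw [hw', dist_eq_norm]
    have e1 : w + t • d - w = t • d := by abel
    rw [e1, norm_smul, Real.norm_eq_abs, abs_of_pos htpos]
    rw [ht]
    rw [div_mul_eq_mul_div, div_lt_iff₀ (by positivity : (0:ℝ) < 2*(‖d‖+1))]
    have hm : 0 < min ε1 ε2 := lt_min hε1 hε2
    nlinarith
  have hw'μ : w' ∈ tile n μ :=
    interior_subset (hball1 (Metric.mem_ball.mpr (hwdist.trans_le (min_le_left _ _))))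
  have hw'ν : w' ∈ tile n ν :=
    interior_subset (hball2 (Metric.mem_ball.mpr (hwdist.trans_le (min_le_right _ _))))
  have h1 := heq w (interior_subset hwμ) (interior_subset hwν)
  have h2 := heq w' hw'μ hw'ν
  have h3 : (inner ℝ (w' - μ) d : ℝ) = (inner ℝ (w - μ) d : ℝ) + t * ‖d‖^2 := by
    have e1 : w' - μ = (w - μ) + t • d := by rw [hw']; abel
    rw [e1, inner_add_left]; exact congrArg _ ((real_inner_smul_left d d t).trans (by rw [real_inner_self_eq_norm_sq]))
  rw [h3] at h2
  have : t * ‖d‖^2 = 0 := by linarith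
  rcases mul_eq_zero.mp this with h | h
  · exact absurd h (ne_of_gt htpos)
  · exact absurd h (by positivity)

lemma permAct_image_Perm (σ : Equiv.Perm (Fin (n+1))) :
    permAct n σ '' Perm n = Perm n := by
  have hlin : IsLinearMap ℝ (permAct n σ) :=
    ⟨permAct_add σ, fun c x => permAct_smul σ c x⟩
  rw [Perm, hlin.image_convexHull]
  congr 1
  ext v
  constructor
  · rintro ⟨w, ⟨τ, rfl⟩, rfl⟩
    exact ⟨σ * τ, (permAct_mul σ τ (ctr n)).symm⟩
  · rintro ⟨τ, rfl⟩
    refine ⟨permAct n (σ⁻¹ * τ) (ctr n), ⟨σ⁻¹ * τ, rfl⟩, ?_⟩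
    rw [permAct_mul, ← mul_assoc, mul_inv_cancel, one_mul]

lemma tile_image (σ : Equiv.Perm (Fin (n+1))) (μ ν : H0 n) :
    (fun x => permAct n σ x + ν) '' tile n μ = tile n (permAct n σ μ + ν) := by
  rw [tile, tile, ← Set.image_comp]
  have hfun : ((fun x => permAct n σ x + ν) ∘ (fun x => μ + x))
      = (fun x => (permAct n σ μ + ν) + x) ∘ (permAct n σ) := by
    funext z
    show permAct n σ (μ + z) + ν = (permAct n σ μ + ν) + permAct n σ z
    rw [permAct_add]
    abel
  rw [hfun, Set.image_comp, permAct_image_Perm]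

lemma permAct_latL (σ : Equiv.Perm (Fin (n+1))) {μ : H0 n} (hμ : μ ∈ latL n) :
    permAct n σ μ ∈ latL n := by
  apply intDiffs_latL
  intro i j
  exact latL_intDiffs hμ (σ⁻¹ i) (σ⁻¹ j)

end Fin13

/-- The `Λ`-translates of `𝔓` tessellate `H₀`: their union is all of
`H₀`, distinct translates have disjoint interiors (relative to `H₀`), and the tiling is
preserved by the affine Weyl group `Λ ⋊ Σ_{n+1}`: `σ(𝔓 + μ) + ν = 𝔓 + (σ(μ) + ν)`,
which is again a tile. -/
theorem statement8 (n : ℕ) (hn : 1 ≤ n) :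
    (⋃ μ ∈ latL n, tile n μ) = (Set.univ : Set (H0 n)) ∧
    (∀ μ ∈ latL n, ∀ ν ∈ latL n, μ ≠ ν →
      interior (tile n μ) ∩ interior (tile n ν) = ∅) ∧
    (∀ σ : Equiv.Perm (Fin (n + 1)), ∀ μ ∈ latL n, ∀ ν ∈ latL n,
      (fun x => permAct n σ x + ν) '' tile n μ = tile n (permAct n σ μ + ν) ∧
      permAct n σ μ + ν ∈ latL n) := by
  refine ⟨?_, ?_, ?_⟩
  · apply Set.eq_univ_of_forall
    intro x
    obtain ⟨μ, hμ, hx⟩ := cover x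
    exact Set.mem_iUnion₂.mpr ⟨μ, hμ, hx⟩
  · intro μ hμ ν hν hne
    exact disj hμ hν hne
  · intro σ μ hμ ν hν
    exact ⟨tile_image σ μ ν, AddSubgroup.add_mem _ (permAct_latL σ hμ) hν⟩

end
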